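/- Let n ≥ 2. Then ⟨I_n, I_n⟩ = n(n−1)/2 > 0, and for every nonzero symmetric real n×n matrix α (αᵀ = α) with tr α = 0 one has ⟨α,α⟩ = −½ Σ_{i,j} α_{ij}² < 0. Hence the restriction of ⟨·,·⟩ to the space of symmetric matrices is a Lorentzian form: it is positive on the line spanned by the identity matrix and negative definite on the complementary hyperplane of trace-free symmetric matrices. -/

import Mathlib

/-! On the identity `⟨I,I⟩ = ½(n² − n)`; on the trace-free hyperplane only `−½ tr(α²)` survives,
and for symmetric `α` this is `−½ tr(αᵀα)`, minus half the sum of the squared entries. -/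

open Matrix

/-- The symmetric bilinear form `⟨α,β⟩ = ½((tr α)(tr β) − tr(αβ))` on `n×n` real matrices. -/
noncomputable def bform (n : ℕ) (α β : Matrix (Fin n) (Fin n) ℝ) : ℝ :=
  (1 / 2) * (Matrix.trace α * Matrix.trace β - Matrix.trace (α * β))

namespace Matrix

variable {m R : Type*} [Fintype m]

theorem trace_mul_self_of_transpose_eq [CommSemiring R] {A : Matrix m m R} (hA : Aᵀ = A) :
    trace (A * A) = ∑ i, ∑ j, A i j ^ 2 := by
  simp only [trace, diag, mul_apply, sq]
  exact Finset.sum_congr rfl fun i _ => Finset.sum_congr rfl fun j _ =>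
    congrArg (A i j * ·) (congrFun (congrFun hA i) j)

theorem sum_sq_entries_pos {n : Type*} [Fintype n] [Ring R] [LinearOrder R] [IsStrictOrderedRing R]
    {A : Matrix m n R} (hA : A ≠ 0) : 0 < ∑ i, ∑ j, A i j ^ 2 := by
  obtain ⟨i, j, hij⟩ : ∃ i j, A i j ≠ 0 := by
    by_contra! h
    exact hA (ext h)
  calc 0 < A i j ^ 2 := by positivity
    _ ≤ ∑ j, A i j ^ 2 := Finset.single_le_sum (fun k _ => sq_nonneg (A i k)) (Finset.mem_univ j)
    _ ≤ ∑ i, ∑ j, A i j ^ 2 :=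
      Finset.single_le_sum (f := fun k => ∑ j, A k j ^ 2)
        (fun k _ => Finset.sum_nonneg fun _ _ => sq_nonneg _) (Finset.mem_univ i)

end Matrix

theorem bform_one (n : ℕ) : bform n 1 1 = (n : ℝ) * ((n : ℝ) - 1) / 2 := by
  simp only [bform, trace_one, mul_one, Fintype.card_fin]
  ring

theorem bform_self_of_trace_eq_zero {n : ℕ} {α : Matrix (Fin n) (Fin n) ℝ} (htr : trace α = 0) :
    bform n α α = -(1 / 2) * trace (α * α) := by
  rw [bform, htr]
  ring

/-- On symmetric matrices the form `⟨·,·⟩` is Lorentzian: `⟨I,I⟩ = n(n−1)/2 > 0`, and on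
the complementary hyperplane of trace-free symmetric matrices it is negative definite,
with `⟨α,α⟩ = −½ Σᵢⱼ αᵢⱼ²` for symmetric trace-free `α`. -/
theorem bform_lorentzian_on_symmetric (n : ℕ) (hn : 2 ≤ n) :
    bform n 1 1 = (n : ℝ) * ((n : ℝ) - 1) / 2 ∧
    0 < bform n 1 1 ∧
    ∀ α : Matrix (Fin n) (Fin n) ℝ, αᵀ = α → Matrix.trace α = 0 →
      (bform n α α = -(1 / 2) * ∑ i : Fin n, ∑ j : Fin n, (α i j) ^ 2 ∧
        (α ≠ 0 → bform n α α < 0)) := by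
  have hn' : (2 : ℝ) ≤ n := by exact_mod_cast hn
  refine ⟨bform_one n, ?_, fun α hsym htr => ?_⟩
  · rw [bform_one]
    have : (0 : ℝ) < n - 1 := by linarith
    positivity
  have hα : bform n α α = -(1 / 2) * ∑ i, ∑ j, α i j ^ 2 := by
    rw [bform_self_of_trace_eq_zero htr, trace_mul_self_of_transpose_eq hsym]
  refine ⟨hα, fun hne => ?_⟩
  rw [hα]
  linarith [sum_sq_entries_pos hne]
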